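/- arXiv:1009.1259 — 5 statements merged into one kernel-verified Lean document; each statement's English description precedes it below -/
import Mathlib

section
/- Let K be a field of characteristic p > 0, A a finite-dimensional K-algebra, K(A) the span of commutators, and for n ≥ 0 set T_n(A) = {x ∈ A : x^{p^n} ∈ K(A)}. Then each T_n(A) is a K-subspace of A, and T_0(A) ⊆ T_1(A) ⊆ T_2(A) ⊆ ⋯ is an increasing chain. -/
open Finset

namespace TnAux

variable {K : Type*} [Field K] {A : Type*} [Ring A] [Algebra K A]

/-- The `K`-span of commutators in `A`. -/
def KA (K : Type*) [Field K] (A : Type*) [Ring A] [Algebra K A] : Submodule K A :=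
  Submodule.span K {y : A | ∃ u v : A, y = u * v - v * u}

lemma comm_mem (u v : A) : u * v - v * u ∈ KA K A :=
  Submodule.subset_span ⟨u, v, rfl⟩

lemma prod_rotate_one_mem (l : List A) : l.prod - (l.rotate 1).prod ∈ KA K A := by
  cases l with
  | nil => simp [Submodule.zero_mem]
  | cons a t =>
    have h : (a :: t).rotate 1 = t ++ [a] := by
      simpa using List.rotate_cons_succ t a 0
    rw [h, List.prod_cons, List.prod_append, List.prod_singleton]
    exact comm_mem a t.prod

lemma prod_rotate_mem (l : List A) (k : ℕ) : l.prod - (l.rotate k).prod ∈ KA K A := by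
  induction k with
  | zero => simp
  | succ k ih =>
    have h2 := prod_rotate_one_mem (K := K) (l.rotate k)
    rw [List.rotate_rotate] at h2
    have := (KA K A).add_mem ih h2
    rwa [sub_add_sub_cancel] at this

/-- The word associated to a boolean vector. -/
def P (x y : A) {n : ℕ} (f : Fin n → Bool) : A :=
  (List.ofFn fun i => cond (f i) x y).prod

lemma P_cons (x y : A) {n : ℕ} (b : Bool) (g : Fin n → Bool) :
    P x y (Fin.cons b g) = cond b x y * P x y g := by
  unfold P
  rw [List.ofFn_succ]
  simp [Fin.cons_zero, Fin.cons_succ]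

lemma expand (x y : A) (n : ℕ) : (x + y) ^ n = ∑ f : Fin n → Bool, P x y f := by
  induction n with
  | zero => simp [P]
  | succ n ih =>
    have h1 : ∀ z : Bool × (Fin n → Bool),
        cond z.1 x y * P x y z.2 = P x y ((Fin.consEquiv fun _ => Bool) z) := by
      rintro ⟨b, g⟩
      exact (P_cons x y b g).symm
    rw [← Fintype.sum_equiv (Fin.consEquiv fun _ : Fin (n + 1) => Bool)
        (fun z : Bool × (Fin n → Bool) => cond z.1 x y * P x y z.2) (P x y) h1,
      Fintype.sum_prod_type, Fintype.sum_bool]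
    simp only [cond_true, cond_false]
    rw [← Finset.mul_sum, ← Finset.mul_sum, ← ih, pow_succ', add_mul]

section Shift

variable {p : ℕ} [NeZero p]

/-- Cyclic shift of a boolean vector. -/
def sh (k : Fin p) (f : Fin p → Bool) : Fin p → Bool := fun i => f (i + k)

lemma sh_zero (f : Fin p → Bool) : sh 0 f = f := by
  funext i; simp [sh]

lemma sh_sh (a b : Fin p) (f : Fin p → Bool) : sh a (sh b f) = sh (a + b) f := by
  funext i
  simp [sh, add_assoc]

lemma ofFn_sh (x y : A) (k : Fin p) (f : Fin p → Bool) :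
    (List.ofFn fun i => cond (sh k f i) x y)
      = (List.ofFn fun i => cond (f i) x y).rotate k.val := by
  apply List.ext_getElem
  · simp
  · intro m h1 h2
    simp only [List.getElem_ofFn, List.getElem_rotate, List.length_ofFn, sh]
    congr 2

lemma P_sh_sub_mem (x y : A) (k : Fin p) (f : Fin p → Bool) :
    P x y f - P x y (sh k f) ∈ KA K A := by
  unfold P
  rw [ofFn_sh]
  exact prod_rotate_mem _ _

lemma sh_const_iff (k : Fin p) (f : Fin p → Bool) :
    (∀ i j, sh k f i = sh k f j) ↔ ∀ i j, f i = f j := by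
  constructor
  · intro h i j
    have := h (i - k) (j - k)
    simpa [sh, sub_add_cancel] using this
  · intro h i j
    exact h _ _

lemma sh_injective (hp : p.Prime) (f : Fin p → Bool) (hf : ¬∀ i j, f i = f j) :
    Function.Injective fun k => sh k f := by
  intro k m h
  by_contra hkm
  apply hf
  set H : AddSubgroup (Fin p) :=
    { carrier := {c | ∀ i, f (i + c) = f i}
      zero_mem' := by intro i; simp
      add_mem' := by
        intro a b ha hb i
        rw [← add_assoc, hb, ha]
      neg_mem' := by
        intro a ha i
        have := ha (i + -a)
        rw [neg_add_cancel_right] at this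
        exact this.symm } with hH
  have hd : k - m ∈ H := by
    intro i
    have hfun : ∀ j, f (j + k) = f (j + m) := fun j => congrFun h j
    have := hfun (i - m)
    rw [sub_add_cancel] at this
    have e : i - m + k = i + (k - m) := by abel
    rw [e] at this
    exact this
  have hd0 : k - m ≠ 0 := sub_ne_zero.mpr hkm
  have hGcard : Nat.card (Fin p) = p := by
    rw [Nat.card_eq_fintype_card, Fintype.card_fin]
  have hcard : Nat.card H ∣ p := by
    have h := AddSubgroup.card_addSubgroup_dvd_card H
    rwa [hGcard] at h
  rcases (hp.eq_one_or_self_of_dvd _ hcard) with h1 | h1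
  · exfalso
    have hbot : H = ⊥ := AddSubgroup.eq_bot_of_card_eq _ h1
    rw [hbot] at hd
    exact hd0 (AddSubgroup.mem_bot.mp hd)
  · have htop : H = ⊤ := by
      apply AddSubgroup.eq_top_of_card_eq
      rw [h1]; simp
    intro i j
    have hc : (j - i) ∈ H := htop ▸ AddSubgroup.mem_top _
    have := hc i
    rw [add_sub_cancel] at this
    exact this.symm

end Shift

section Char

variable {p : ℕ} [NeZero p] [CharP K p]

include K in
lemma psmul (a : A) : p • a = 0 := by
  rw [← Nat.cast_smul_eq_nsmul K, CharP.cast_eq_zero, zero_smul]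

lemma orbit_sum_mem (x y : A) (f : Fin p → Bool) :
    ∑ k : Fin p, P x y (sh k f) ∈ KA K A := by
  have h0 : ∑ k : Fin p, (P x y f - P x y (sh k f)) ∈ KA K A :=
    Submodule.sum_mem _ fun k _ => P_sh_sub_mem x y k f
  have he : ∑ k : Fin p, (P x y f - P x y (sh k f))
      = p • P x y f - ∑ k : Fin p, P x y (sh k f) := by
    rw [Finset.sum_sub_distrib, Finset.sum_const, Finset.card_univ, Fintype.card_fin]
  rw [he, psmul (K := K), zero_sub] at h0
  simpa using (KA K A).neg_mem h0

lemma sum_shiftclosed (hp : p.Prime) (x y : A) :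
    ∀ N : Finset (Fin p → Bool), (∀ f ∈ N, ¬∀ i j, f i = f j) →
      (∀ f ∈ N, ∀ k, sh k f ∈ N) → ∑ f ∈ N, P x y f ∈ KA K A := by
  classical
  intro N
  induction N using Finset.strongInduction with
  | _ N ih =>
    intro hNc hcl
    rcases N.eq_empty_or_nonempty with rfl | ⟨f, hf⟩
    · simp
    · set O : Finset (Fin p → Bool) := Finset.image (fun k => sh k f) Finset.univ with hO
      have hfO : f ∈ O := Finset.mem_image.2 ⟨0, Finset.mem_univ _, sh_zero f⟩
      have hON : O ⊆ N := by
        intro g hg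
        rcases Finset.mem_image.1 hg with ⟨k, -, rfl⟩
        exact hcl f hf k
      have hOsum : ∑ g ∈ O, P x y g ∈ KA K A := by
        rw [hO, Finset.sum_image (fun a _ b _ hab => sh_injective hp f (hNc f hf) hab)]
        exact orbit_sum_mem x y f
      have hssub : N \ O ⊂ N :=
        Finset.sdiff_ssubset hON ⟨f, hfO⟩
      have hrest : ∑ g ∈ N \ O, P x y g ∈ KA K A := by
        apply ih _ hssub
        · intro g hg
          exact hNc g (Finset.mem_sdiff.1 hg).1
        · intro g hg k
          rcases Finset.mem_sdiff.1 hg with ⟨hgN, hgO⟩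
          rw [Finset.mem_sdiff]
          refine ⟨hcl g hgN k, ?_⟩
          intro hmem
          apply hgO
          rcases Finset.mem_image.1 hmem with ⟨m, -, hm⟩
          have h2 : sh (-k) (sh k g) = sh (-k) (sh m f) := by rw [hm]
          rw [sh_sh, sh_sh, neg_add_cancel, sh_zero] at h2
          exact Finset.mem_image.2 ⟨-k + m, Finset.mem_univ _, h2.symm⟩
      have := (KA K A).add_mem hrest hOsum
      rwa [Finset.sum_sdiff hON] at this

lemma key_add (hp : p.Prime) (x y : A) :
    (x + y) ^ p - x ^ p - y ^ p ∈ KA K A := by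
  classical
  have hsplit := Finset.sum_filter_add_sum_filter_not Finset.univ
    (fun f : Fin p → Bool => ∀ i j, f i = f j) (P x y)
  have hne : (fun _ : Fin p => true) ≠ fun _ => false := by
    intro h
    have := congrFun h 0
    simp at this
  have hconstset : Finset.univ.filter (fun f : Fin p → Bool => ∀ i j, f i = f j)
      = {fun _ => true, fun _ => false} := by
    ext f
    simp only [Finset.mem_filter, Finset.mem_univ, true_and, Finset.mem_insert,
      Finset.mem_singleton]
    constructor
    · intro h
      cases hb : f 0 with
      | true => left; funext i; rw [h i 0, hb]
      | false => right; funext i; rw [h i 0, hb]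
    · rintro (rfl | rfl) i j <;> rfl
  have hPt : P x y (fun _ : Fin p => true) = x ^ p := by
    unfold P
    simp only [cond_true]
    rw [List.ofFn_const, List.prod_replicate]
  have hPf : P x y (fun _ : Fin p => false) = y ^ p := by
    unfold P
    simp only [cond_false]
    rw [List.ofFn_const, List.prod_replicate]
  have hrest : ∑ f ∈ Finset.univ.filter (fun f : Fin p → Bool => ¬∀ i j, f i = f j),
      P x y f ∈ KA K A := by
    apply sum_shiftclosed hp x y
    · intro f hfm
      exact (Finset.mem_filter.1 hfm).2
    · intro f hfm k
      rw [Finset.mem_filter]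
      refine ⟨Finset.mem_univ _, ?_⟩
      intro hconst
      exact (Finset.mem_filter.1 hfm).2 ((sh_const_iff k f).1 hconst)
  have hexp := expand x y p
  rw [← hsplit, hconstset, Finset.sum_pair hne, hPt, hPf] at hexp
  have : (x + y) ^ p - x ^ p - y ^ p
      = ∑ f ∈ Finset.univ.filter (fun f : Fin p → Bool => ¬∀ i j, f i = f j), P x y f := by
    rw [hexp]; abel
  rw [this]
  exact hrest

include K in
lemma neg_one_pow (hp : p.Prime) : ((-1 : A)) ^ p = -1 := by
  rcases hp.eq_two_or_odd' with rfl | hodd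
  · have h2 : (1 : A) + 1 = 0 := by
      have := psmul (K := K) (A := A) (p := 2) (1 : A)
      simpa [two_smul] using this
    have hn : (-1 : A) = 1 := by
      rw [neg_eq_iff_add_eq_zero]
      simpa using h2
    rw [hn, one_pow]
  · exact hodd.neg_one_pow

lemma pow_p_mem (hp : p.Prime) {s : A} (hs : s ∈ KA K A) : s ^ p ∈ KA K A := by
  induction hs using Submodule.span_induction with
  | mem w hw =>
    rcases hw with ⟨u, v, rfl⟩
    -- (uv - vu)^p ≡ (uv)^p - (vu)^p ≡ 0 mod KA
    have h1 : (u * v + -(v * u)) ^ p - (u * v) ^ p - (-(v * u)) ^ p ∈ KA K A :=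
      key_add hp (u * v) (-(v * u))
    have hneg : (-(v * u)) ^ p = -((v * u) ^ p) := by
      rw [neg_pow, neg_one_pow (K := K) hp, neg_one_mul]
    rw [hneg, ← sub_eq_add_neg, sub_neg_eq_add] at h1
    -- (uv)^p - (vu)^p is a commutator
    have hsc : SemiconjBy u (v * u) (u * v) := by
      unfold SemiconjBy
      rw [mul_assoc]
    have hscp := hsc.pow_right (p - 1)
    have hp1 : p - 1 + 1 = p := Nat.succ_pred_eq_of_pos hp.pos
    have huv : (u * v) ^ p = (u * (v * u) ^ (p - 1)) * v := by
      conv_lhs => rw [← hp1, pow_succ, ← mul_assoc, ← hscp.eq]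
    have hvu : (v * u) ^ p = v * (u * (v * u) ^ (p - 1)) := by
      conv_lhs => rw [← hp1, pow_succ', mul_assoc]
    have hcm : (u * v) ^ p - (v * u) ^ p ∈ KA K A := by
      rw [huv, hvu]
      exact comm_mem _ _
    have := (KA K A).add_mem h1 hcm
    have e : ((u * v - v * u) ^ p - (u * v) ^ p + (v * u) ^ p)
        + ((u * v) ^ p - (v * u) ^ p) = (u * v - v * u) ^ p := by abel
    rwa [e] at this
  | zero =>
    rw [zero_pow hp.ne_zero]
    exact (KA K A).zero_mem
  | add a b ha hb iha ihb =>
    have h1 := key_add (K := K) hp a b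
    have := (KA K A).add_mem ((KA K A).add_mem h1 iha) ihb
    have e : ((a + b) ^ p - a ^ p - b ^ p + a ^ p) + b ^ p = (a + b) ^ p := by abel
    rwa [e] at this
  | smul c a ha iha =>
    rw [smul_pow]
    exact (KA K A).smul_mem _ iha

lemma pow_sub_pow_mem (hp : p.Prime) {a b : A} (h : a - b ∈ KA K A) :
    a ^ p - b ^ p ∈ KA K A := by
  have h1 := key_add (K := K) hp b (a - b)
  have e0 : b + (a - b) = a := by abel
  rw [e0] at h1
  have h2 := pow_p_mem hp h
  have := (KA K A).add_mem h1 h2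
  have e : (a ^ p - b ^ p - (a - b) ^ p) + (a - b) ^ p = a ^ p - b ^ p := by abel
  rwa [e] at this

lemma key_add_pow (hp : p.Prime) (x y : A) (n : ℕ) :
    (x + y) ^ p ^ n - x ^ p ^ n - y ^ p ^ n ∈ KA K A := by
  induction n with
  | zero => simp
  | succ n ih =>
    have h1 : ((x + y) ^ p ^ n) ^ p - (x ^ p ^ n + y ^ p ^ n) ^ p ∈ KA K A := by
      apply pow_sub_pow_mem hp
      have e : (x + y) ^ p ^ n - (x ^ p ^ n + y ^ p ^ n)
          = (x + y) ^ p ^ n - x ^ p ^ n - y ^ p ^ n := by abel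
      rw [e]; exact ih
    have h2 := key_add (K := K) hp (x ^ p ^ n) (y ^ p ^ n)
    have := (KA K A).add_mem h1 h2
    have e2 : ((x + y) ^ p ^ n) ^ p - (x ^ p ^ n + y ^ p ^ n) ^ p
        + ((x ^ p ^ n + y ^ p ^ n) ^ p - (x ^ p ^ n) ^ p - (y ^ p ^ n) ^ p)
        = ((x + y) ^ p ^ n) ^ p - (x ^ p ^ n) ^ p - (y ^ p ^ n) ^ p := by abel
    rw [e2] at this
    rwa [← pow_mul, ← pow_mul, ← pow_mul, ← pow_succ] at this

end Char

end TnAux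

/-- For a finite-dimensional algebra `A` over a field of characteristic `p > 0`,
the sets `T_n(A) = {x : x^(p^n) ∈ K(A)}` are `K`-subspaces forming an
increasing chain `T_0(A) ⊆ T_1(A) ⊆ T_2(A) ⊆ ⋯`. -/
theorem Tn_subspace_and_monotone
    (K : Type*) [Field K] (A : Type*) [Ring A] [Algebra K A] [FiniteDimensional K A]
    (p : ℕ) [Fact p.Prime] [CharP K p] :
    ∃ T : ℕ → Submodule K A,
      (∀ n : ℕ, (T n : Set A) =
        {x : A | x ^ p ^ n ∈ Submodule.span K {y : A | ∃ u v : A, y = u * v - v * u}}) ∧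
      Monotone T := by
  have hp : p.Prime := Fact.out
  haveI : NeZero p := ⟨hp.ne_zero⟩
  refine ⟨fun n =>
    { carrier := {x : A | x ^ p ^ n ∈ TnAux.KA K A}
      add_mem' := ?_
      zero_mem' := ?_
      smul_mem' := ?_ }, fun n => rfl, ?_⟩
  case _ n =>
    intro a b ha hb
    have h1 := TnAux.key_add_pow (A := A) (K := K) hp a b n
    have := (TnAux.KA K A).add_mem ((TnAux.KA K A).add_mem h1 ha) hb
    have e : ((a + b) ^ p ^ n - a ^ p ^ n - b ^ p ^ n + a ^ p ^ n) + b ^ p ^ n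
        = (a + b) ^ p ^ n := by abel
    rwa [e] at this
  case _ n =>
    show (0 : A) ^ p ^ n ∈ TnAux.KA K A
    rw [zero_pow (pow_ne_zero n hp.ne_zero)]
    exact (TnAux.KA K A).zero_mem
  case _ n =>
    intro c x hx
    show (c • x) ^ p ^ n ∈ TnAux.KA K A
    rw [smul_pow]
    exact (TnAux.KA K A).smul_mem _ hx
  · apply monotone_nat_of_le_succ
    intro n x hx
    show x ^ p ^ (n + 1) ∈ TnAux.KA K A
    rw [pow_succ, pow_mul]
    exact TnAux.pow_p_mem hp hx
end

section
/- Let K be a field of characteristic p > 0 and A a finite-dimensional symmetric K-algebra with symmetrizing form (-,-). For each n ≥ 0, the orthogonal complement T_n(A)^⊥ (with respect to (-,-)) is an ideal of the center Z(A), and these ideals form a descending chain Z(A) = T_0(A)^⊥ ⊇ T_1(A)^⊥ ⊇ T_2(A)^⊥ ⊇ ⋯. -/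
section KulAux

variable {K : Type*} [Field K] {A : Type*} [Ring A] [Algebra K A]

/-- The commutator subspace. -/
private def kKA (K : Type*) [Field K] (A : Type*) [Ring A] [Algebra K A] : Submodule K A :=
  Submodule.span K {y : A | ∃ u v : A, y = u * v - v * u}

private lemma kKA_comm_mem (u v : A) : u * v - v * u ∈ kKA K A :=
  Submodule.subset_span ⟨u, v, rfl⟩

variable (p : ℕ) [Fact p.Prime] [CharP K p]

private lemma kul_psmul (K' : Type*) [Field K'] [Algebra K' A] [CharP K' p] (x : A) :
    p • x = 0 := by
  rw [← Nat.cast_smul_eq_nsmul K', CharP.cast_eq_zero, zero_smul]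

private lemma kul_rotate_mem (l : List A) : (l.rotate 1).prod - l.prod ∈ kKA K A := by
  cases l with
  | nil => simpa using (kKA K A).zero_mem
  | cons x t =>
      rw [List.rotate_cons_succ, List.rotate_zero, List.prod_append, List.prod_singleton,
        List.prod_cons]
      exact kKA_comm_mem t.prod x

/-- Cyclic product indexed by `ZMod p`. -/
private def kCyc (g : ZMod p → A) : A :=
  (List.ofFn (fun i : Fin p => g ((i : ℕ) : ZMod p))).prod

private lemma kCyc_const (x : A) : kCyc p (fun _ => x) = x ^ p := by
  simp [kCyc, List.ofFn_const, List.prod_replicate]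

private lemma kCyc_shift_one (g : ZMod p → A) :
    kCyc p (fun i => g (i + 1)) - kCyc p g ∈ kKA K A := by
  have hl : List.ofFn (fun i : Fin p => g (((i : ℕ) : ZMod p) + 1)) =
      (List.ofFn (fun i : Fin p => g ((i : ℕ) : ZMod p))).rotate 1 := by
    apply List.ext_getElem
    · simp
    · intro k h1 h2
      rw [List.getElem_ofFn, List.getElem_rotate, List.getElem_ofFn]
      congr 1
      simp only [List.length_ofFn]
      have hcast : (((k + 1) % p : ℕ) : ZMod p) = ((k + 1 : ℕ) : ZMod p) :=
        ZMod.natCast_mod _ _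
      rw [hcast]
      push_cast
      ring
  show (List.ofFn (fun i : Fin p => g (((i : ℕ) : ZMod p) + 1))).prod - _ ∈ _
  rw [hl]
  exact kul_rotate_mem _
  
private lemma kCyc_shift_nat (g : ZMod p → A) (k : ℕ) :
    kCyc p (fun i => g (i + (k : ZMod p))) - kCyc p g ∈ kKA K A := by
  induction k with
  | zero =>
      have h : (fun i : ZMod p => g (i + ((0 : ℕ) : ZMod p))) = g := by
        funext i; simp
      rw [h]
      simpa using (kKA K A).zero_mem
  | succ k ih =>
      have h1 : kCyc p (fun i => g ((i + 1) + (k : ZMod p)))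
          - kCyc p (fun i => g (i + (k : ZMod p))) ∈ kKA K A :=
        kCyc_shift_one p (fun i => g (i + (k : ZMod p)))
      have he : (fun i : ZMod p => g (i + ((k + 1 : ℕ) : ZMod p))) =
          (fun i : ZMod p => g ((i + 1) + (k : ZMod p))) := by
        funext i; congr 1; push_cast; ring
      rw [he]
      have h3 := (kKA K A).add_mem h1 ih
      rwa [sub_add_sub_cancel] at h3

private lemma kCyc_shift (g : ZMod p → A) (k : ZMod p) :
    kCyc p (fun i => g (i + k)) - kCyc p g ∈ kKA K A := by
  haveI : NeZero p := ⟨(Fact.out : p.Prime).ne_zero⟩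
  obtain ⟨m, rfl⟩ := ZMod.natCast_zmod_surjective k
  exact kCyc_shift_nat p g m

/-- Noncommutative binomial expansion. -/
private lemma kul_expand (a b : A) (n : ℕ) :
    (a + b) ^ n = ∑ f : Fin n → Bool, (List.ofFn fun i => cond (f i) a b).prod := by
  induction n with
  | zero => simp
  | succ n ih =>
      have hsum : ∑ f : Fin (n + 1) → Bool, (List.ofFn fun i => cond (f i) a b).prod =
          ∑ q : Bool × (Fin n → Bool),
            cond q.1 a b * (List.ofFn fun i => cond (q.2 i) a b).prod := by
        refine (Fintype.sum_equiv (Fin.consEquiv (fun _ => Bool)) _ _ ?_).symm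
        intro q
        rw [List.ofFn_succ, List.prod_cons]
        simp [Fin.consEquiv]
      rw [hsum, Fintype.sum_prod_type, pow_succ', ih, Fintype.sum_bool]
      rw [add_mul, Finset.mul_sum, Finset.mul_sum]
      rfl

/-- Jacobson's lemma: Frobenius is additive modulo commutators. -/
private lemma kul_jacobson (a b : A) : (a + b) ^ p - a ^ p - b ^ p ∈ kKA K A := by
  classical
  haveI : NeZero p := ⟨(Fact.out : p.Prime).ne_zero⟩
  let term : (ZMod p → Bool) → A := fun F => kCyc p (fun j => cond (F j) a b)
  -- expansion over `ZMod p`-indexed words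
  have hexp : (a + b) ^ p = ∑ F : ZMod p → Bool, term F := by
    rw [kul_expand a b p]
    have hc : Function.Bijective (fun i : Fin p => ((i : ℕ) : ZMod p)) := by
      rw [Fintype.bijective_iff_injective_and_card]
      constructor
      · intro i j h
        apply Fin.ext
        have h2 := congrArg ZMod.val h
        rwa [ZMod.val_cast_of_lt i.isLt, ZMod.val_cast_of_lt j.isLt] at h2
      · simp [ZMod.card]
    refine (Fintype.sum_equiv
      (Equiv.arrowCongr (Equiv.ofBijective _ hc).symm (Equiv.refl Bool)) _ _ ?_).symm
    intro F
    rfl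
  -- the cyclic-shift setoid
  letI S : Setoid (ZMod p → Bool) :=
    ⟨fun f g => ∃ k : ZMod p, g = fun i => f (i + k),
      ⟨fun f => ⟨0, by funext i; simp⟩,
       fun {f g} h => by
         obtain ⟨k, rfl⟩ := h
         exact ⟨-k, by funext i; simp⟩,
       fun {f g h} h1 h2 => by
         obtain ⟨k, rfl⟩ := h1
         obtain ⟨k', rfl⟩ := h2
         refine ⟨k + k', ?_⟩
         funext i
         show f ((i + k') + k) = f (i + (k + k'))
         congr 1
         ring⟩⟩
  letI : DecidableRel S.r := fun f g => Classical.dec _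
  letI : DecidableEq (Quotient S) := fun q q' => Classical.dec _
  have hfib : ∑ F : ZMod p → Bool, term F =
      ∑ q : Quotient S, ∑ F ∈ Finset.univ.filter (fun F => Quotient.mk S F = q), term F :=
    (Finset.sum_fiberwise_of_maps_to (fun F _ => Finset.mem_univ _) term).symm
  -- fibers of constants are singletons
  have hconstfib : ∀ x : Bool,
      Finset.univ.filter (fun F => Quotient.mk S F = Quotient.mk S (fun _ => x)) =
        {fun _ => x} := by
    intro x
    ext F
    simp only [Finset.mem_filter, Finset.mem_univ, true_and, Finset.mem_singleton]
    constructor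
    · intro h
      obtain ⟨k, hk⟩ := Quotient.exact h
      funext j
      have h2 : x = F ((j - k) + k) := congrFun hk (j - k)
      have e : j - k + k = j := by ring
      rw [e] at h2
      exact h2.symm
    · rintro rfl; rfl
  -- invariance under a nonzero shift forces constancy
  have hconst : ∀ (f : ZMod p → Bool) (d : ZMod p), d ≠ 0 →
      ((fun i => f (i + d)) = f) → ∀ x y : ZMod p, f x = f y := by
    intro f d hd h x y
    have hn : ∀ (n : ℕ) (x : ZMod p), f (x + n • d) = f x := by
      intro n
      induction n with
      | zero => intro x; simp
      | succ n ih =>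
          intro x
          have e1 : x + (n + 1) • d = (x + d) + n • d := by
            rw [succ_nsmul]; ring
          rw [e1, ih (x + d)]
          exact congrFun h x
    have hu : ((((y - x) * d⁻¹).val : ℕ) : ZMod p) = (y - x) * d⁻¹ :=
      ZMod.natCast_rightInverse _
    have h5 := hn ((y - x) * d⁻¹).val x
    rw [nsmul_eq_mul, hu] at h5
    have e2 : x + (y - x) * d⁻¹ * d = y := by
      rw [mul_assoc, inv_mul_cancel₀ hd, mul_one]; ring
    rw [e2] at h5
    exact h5.symm
  -- orbit sums of nonconstant functions lie in the commutator space
  have key : ∀ f₀ : ZMod p → Bool,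
      (∀ k k' : ZMod p, (fun i => f₀ (i + k)) = (fun i => f₀ (i + k')) → k = k') →
      (∑ F ∈ Finset.univ.filter (fun F => Quotient.mk S F = Quotient.mk S f₀), term F)
        ∈ kKA K A := by
    intro f₀ hinj
    have himg : Finset.univ.filter (fun F => Quotient.mk S F = Quotient.mk S f₀) =
        Finset.image (fun k : ZMod p => (fun i => f₀ (i + k))) Finset.univ := by
      ext F
      simp only [Finset.mem_filter, Finset.mem_univ, true_and, Finset.mem_image]
      constructor
      · intro h
        obtain ⟨k, hk⟩ := Quotient.exact h
        refine ⟨-k, ?_⟩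
        funext i
        have h2 : f₀ (i + -k) = F ((i + -k) + k) := congrFun hk (i + -k)
        rw [h2]
        congr 1
        ring
      · rintro ⟨k, rfl⟩
        apply Quotient.sound
        exact ⟨-k, by funext i; congr 1; ring⟩
    rw [himg, Finset.sum_image (fun k _ k' _ h => hinj k k' h)]
    have hsplit : ∑ k : ZMod p, term (fun i => f₀ (i + k)) =
        (∑ k : ZMod p, (term (fun i => f₀ (i + k)) - term f₀)) + ∑ _k : ZMod p, term f₀ := by
      rw [← Finset.sum_add_distrib]
      simp
    have h2 : ∑ _k : ZMod p, term f₀ = 0 := by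
      rw [Finset.sum_const, Finset.card_univ, ZMod.card]
      exact kul_psmul p K _
    rw [hsplit, h2, add_zero]
    refine Submodule.sum_mem _ (fun k _ => ?_)
    exact kCyc_shift p (fun j => cond (f₀ j) a b) k
  -- assemble
  set qa : Quotient S := Quotient.mk S (fun _ => true) with hqa
  set qb : Quotient S := Quotient.mk S (fun _ => false) with hqb
  have hqab : qa ≠ qb := by
    intro h
    obtain ⟨k, hk⟩ := Quotient.exact h
    exact absurd (congrFun hk 0) (by simp)
  have hfa : (∑ F ∈ Finset.univ.filter (fun F => Quotient.mk S F = qa), term F) = a ^ p := by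
    rw [hqa, hconstfib true, Finset.sum_singleton]
    exact kCyc_const p a
  have hfb : (∑ F ∈ Finset.univ.filter (fun F => Quotient.mk S F = qb), term F) = b ^ p := by
    rw [hqb, hconstfib false, Finset.sum_singleton]
    exact kCyc_const p b
  have hmem_a : qa ∈ (Finset.univ : Finset (Quotient S)) := Finset.mem_univ _
  have hmem_b : qb ∈ (Finset.univ : Finset (Quotient S)).erase qa :=
    Finset.mem_erase.2 ⟨hqab.symm, Finset.mem_univ _⟩
  have hsum1 : (∑ F ∈ Finset.univ.filter (fun F => Quotient.mk S F = qa), term F) +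
      ∑ q ∈ (Finset.univ : Finset (Quotient S)).erase qa,
        (∑ F ∈ Finset.univ.filter (fun F => Quotient.mk S F = q), term F) =
      ∑ q : Quotient S, ∑ F ∈ Finset.univ.filter (fun F => Quotient.mk S F = q), term F :=
    Finset.add_sum_erase (Finset.univ : Finset (Quotient S))
      (fun q => ∑ F ∈ Finset.univ.filter (fun F => Quotient.mk S F = q), term F) hmem_a
  have hsum2 : (∑ F ∈ Finset.univ.filter (fun F => Quotient.mk S F = qb), term F) +
      ∑ q ∈ ((Finset.univ : Finset (Quotient S)).erase qa).erase qb,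
        (∑ F ∈ Finset.univ.filter (fun F => Quotient.mk S F = q), term F) =
      ∑ q ∈ (Finset.univ : Finset (Quotient S)).erase qa,
        (∑ F ∈ Finset.univ.filter (fun F => Quotient.mk S F = q), term F) :=
    Finset.add_sum_erase ((Finset.univ : Finset (Quotient S)).erase qa)
      (fun q => ∑ F ∈ Finset.univ.filter (fun F => Quotient.mk S F = q), term F) hmem_b
  have hfinal : (a + b) ^ p - a ^ p - b ^ p =
      ∑ q ∈ ((Finset.univ : Finset (Quotient S)).erase qa).erase qb,
        ∑ F ∈ Finset.univ.filter (fun F => Quotient.mk S F = q), term F := by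
    rw [hexp, hfib, ← hsum1, ← hsum2, hfa, hfb]
    abel
  rw [hfinal]
  refine Submodule.sum_mem _ (fun q hq => ?_)
  obtain ⟨f₀, rfl⟩ := Quotient.exists_rep q
  have hq1 : Quotient.mk S f₀ ≠ qa := (Finset.mem_erase.1 (Finset.mem_erase.1 hq).2).1
  have hq2 : Quotient.mk S f₀ ≠ qb := (Finset.mem_erase.1 hq).1
  apply key
  intro k k' hkk
  by_contra hne
  have hd : k - k' ≠ 0 := sub_ne_zero.2 hne
  have hshift : (fun i => f₀ (i + (k - k'))) = f₀ := by
    funext i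
    have h2 : f₀ ((i - k') + k) = f₀ ((i - k') + k') := congrFun hkk (i - k')
    have e1 : i - k' + k = i + (k - k') := by ring
    have e2 : i - k' + k' = i := by ring
    rw [e1, e2] at h2
    exact h2
  have hcc := hconst f₀ (k - k') hd hshift
  cases hb : f₀ 0 with
  | true =>
      apply hq1
      rw [hqa]
      apply Quotient.sound
      refine ⟨0, ?_⟩
      funext i
      rw [add_zero, hcc i 0, hb]
  | false =>
      apply hq2
      rw [hqb]
      apply Quotient.sound
      refine ⟨0, ?_⟩
      funext i
      rw [add_zero, hcc i 0, hb]

private lemma kul_mul_pow_mul (u v : A) (n : ℕ) :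
    (u * v) ^ (n + 1) = u * ((v * u) ^ n * v) := by
  induction n with
  | zero => simp
  | succ n ih =>
      rw [pow_succ, ih, pow_succ]
      noncomm_ring

/-- The commutator space is stable under `p`-th powers. -/
private lemma kul_pow_mem {x : A} (hx : x ∈ kKA K A) : x ^ p ∈ kKA K A := by
  induction hx using Submodule.span_induction with
  | mem y hy =>
      obtain ⟨u, v, rfl⟩ := hy
      have hjac := kul_jacobson (K := K) p (u * v) (-(v * u))
      have hneg : (-(v * u)) ^ p + (v * u) ^ p = 0 := by
        rcases (Fact.out : p.Prime).eq_two_or_odd' with h2 | hodd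
        · subst h2
          rw [neg_sq, ← two_smul ℕ]
          exact kul_psmul 2 K _
        · rw [hodd.neg_pow]
          exact neg_add_cancel _
      have hcomm : (u * v) ^ p - (v * u) ^ p ∈ kKA K A := by
        obtain ⟨m, hm⟩ : ∃ m, p = m + 1 :=
          ⟨p - 1, (Nat.succ_pred_eq_of_pos (Fact.out : p.Prime).pos).symm⟩
        rw [hm, kul_mul_pow_mul, pow_succ]
        have h : (v * u) ^ m * (v * u) = ((v * u) ^ m * v) * u := by noncomm_ring
        rw [h]
        exact kKA_comm_mem u ((v * u) ^ m * v)
      have he : (u * v - v * u) ^ p =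
          ((u * v + -(v * u)) ^ p - (u * v) ^ p - (-(v * u)) ^ p)
            + ((u * v) ^ p - (v * u) ^ p) + ((-(v * u)) ^ p + (v * u) ^ p) := by
        rw [sub_eq_add_neg]
        abel
      rw [he, hneg, add_zero]
      exact (kKA K A).add_mem hjac hcomm
  | zero =>
      rw [zero_pow (Fact.out : p.Prime).ne_zero]
      exact (kKA K A).zero_mem
  | add y z _ _ hy hz =>
      have hjac := kul_jacobson (K := K) p y z
      have he : (y + z) ^ p = (((y + z) ^ p - y ^ p - z ^ p) + y ^ p) + z ^ p := by abel
      rw [he]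
      exact (kKA K A).add_mem ((kKA K A).add_mem hjac hy) hz
  | smul c y _ hy =>
      rw [smul_pow]
      exact (kKA K A).smul_mem _ hy

private lemma kul_pow_pow_mem {x : A} (hx : x ∈ kKA K A) (n : ℕ) :
    x ^ p ^ n ∈ kKA K A := by
  induction n with
  | zero => simpa using hx
  | succ n ih =>
      rw [pow_succ, pow_mul]
      exact kul_pow_mem p ih

private lemma kul_central_mul_mem {z : A} (hz : ∀ w : A, z * w = w * z) {y : A}
    (hy : y ∈ kKA K A) : z * y ∈ kKA K A := by
  induction hy using Submodule.span_induction with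
  | mem y hy =>
      obtain ⟨u, v, rfl⟩ := hy
      have h : z * (u * v - v * u) = (z * u) * v - v * (z * u) := by
        rw [mul_sub]
        congr 1
        · rw [mul_assoc]
        · rw [← mul_assoc, hz v, mul_assoc]
      rw [h]
      exact kKA_comm_mem _ _
  | zero => rw [mul_zero]; exact (kKA K A).zero_mem
  | add u w _ _ hu hw => rw [mul_add]; exact (kKA K A).add_mem hu hw
  | smul c u _ hu => rw [mul_smul_comm]; exact (kKA K A).smul_mem _ hu

end KulAux

/-- The Külshammer orthogonal complements `T_n(A)^⊥` are ideals of the center `Z(A)`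
and form a descending chain `Z(A) = T_0(A)^⊥ ⊇ T_1(A)^⊥ ⊇ ⋯`. -/
theorem kulshammer_ideals_descending_chain
    (K : Type*) [Field K] (A : Type*) [Ring A] [Algebra K A] [FiniteDimensional K A]
    (p : ℕ) [Fact p.Prime] [CharP K p]
    (B : A →ₗ[K] A →ₗ[K] K)
    (hassoc : ∀ a b c : A, B (a * b) c = B a (b * c))
    (hsymm : ∀ a b : A, B a b = B b a)
    (hnondeg : ∀ a : A, (∀ b : A, B a b = 0) → a = 0) :
    let KA : Submodule K A := Submodule.span K {y : A | ∃ u v : A, y = u * v - v * u}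
    let T : ℕ → Set A := fun n => {x : A | x ^ p ^ n ∈ KA}
    let P : ℕ → Set A := fun n => {a : A | ∀ x ∈ T n, B a x = 0}
    (∀ n : ℕ, P n ⊆ (Subalgebra.center K A : Set A)) ∧
    (∀ n : ℕ, ∀ a ∈ P n, ∀ b ∈ P n, a + b ∈ P n) ∧
    (∀ (n : ℕ) (c : K), ∀ a ∈ P n, c • a ∈ P n) ∧
    (∀ n : ℕ, ∀ z ∈ Subalgebra.center K A, ∀ a ∈ P n, z * a ∈ P n) ∧
    (∀ n : ℕ, P (n + 1) ⊆ P n) ∧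
    P 0 = (Subalgebra.center K A : Set A) := by
  intro KA T P
  have hTmono : ∀ n : ℕ, ∀ x : A, x ∈ T n → x ∈ T (n + 1) := by
    intro n x hx
    show x ^ p ^ (n + 1) ∈ KA
    rw [pow_succ, pow_mul]
    exact kul_pow_mem p hx
  have hcommT : ∀ (n : ℕ) (u v : A), u * v - v * u ∈ T n := fun n u v =>
    kul_pow_pow_mem p (kKA_comm_mem u v) n
  have c1 : ∀ n : ℕ, P n ⊆ (Subalgebra.center K A : Set A) := by
    intro n a ha
    rw [SetLike.mem_coe, Subalgebra.mem_center_iff]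
    intro u
    have h0 : ∀ v : A, B (a * u - u * a) v = 0 := by
      intro v
      have h1 : B a (u * v - v * u) = 0 := ha _ (hcommT n u v)
      have h2 : B a (u * v) - B a (v * u) = 0 := by
        rw [← map_sub]; exact h1
      have e1 : B a (u * v) = B (a * u) v := (hassoc a u v).symm
      have e2 : B a (v * u) = B (u * a) v := by
        rw [hsymm a (v * u), hassoc v u a, hsymm v (u * a)]
      rw [map_sub, LinearMap.sub_apply, ← e1, ← e2]
      exact h2
    have h3 := hnondeg _ h0
    have h4 : a * u = u * a := sub_eq_zero.1 h3
    exact h4.symm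
  have c2 : ∀ n : ℕ, ∀ a ∈ P n, ∀ b ∈ P n, a + b ∈ P n := by
    intro n a ha b hb x hx
    show B (a + b) x = 0
    rw [map_add, LinearMap.add_apply, ha x hx, hb x hx, add_zero]
  have c3 : ∀ (n : ℕ) (c : K), ∀ a ∈ P n, c • a ∈ P n := by
    intro n c a ha x hx
    show B (c • a) x = 0
    rw [map_smul, LinearMap.smul_apply, ha x hx, smul_zero]
  have c4 : ∀ n : ℕ, ∀ z ∈ Subalgebra.center K A, ∀ a ∈ P n, z * a ∈ P n := by
    intro n z hz a ha x hx
    have hzc : ∀ w : A, z * w = w * z := fun w => (Subalgebra.mem_center_iff.1 hz w).symm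
    have hcz : ∀ w : A, Commute z w := fun w => hzc w
    have hzx : z * x ∈ T n := by
      show (z * x) ^ p ^ n ∈ KA
      rw [(hcz x).mul_pow]
      exact kul_central_mul_mem (fun w => ((hcz w).pow_left (p ^ n))) hx
    show B (z * a) x = 0
    have e : B (z * a) x = B a (z * x) := by
      rw [hassoc z a x, hsymm z (a * x), hassoc a x z, ← hzc x]
    rw [e]
    exact ha _ hzx
  have c5 : ∀ n : ℕ, P (n + 1) ⊆ P n := by
    intro n a ha x hx
    exact ha x (hTmono n x hx)
  have c6 : P 0 = (Subalgebra.center K A : Set A) := by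
    apply Set.Subset.antisymm (c1 0)
    intro z hz x hx
    have hzc : ∀ w : A, z * w = w * z := fun w => (Subalgebra.mem_center_iff.1 hz w).symm
    have hx0 : x ^ p ^ 0 ∈ KA := hx
    rw [pow_zero, pow_one] at hx0
    have hker : (Submodule.span K {y : A | ∃ u v : A, y = u * v - v * u}) ≤
        LinearMap.ker (B z) := by
      rw [Submodule.span_le]
      rintro y ⟨u, v, rfl⟩
      simp only [SetLike.mem_coe, LinearMap.mem_ker]
      have hsub : (B z) (u * v - v * u) = B z (u * v) - B z (v * u) := map_sub _ _ _
      rw [hsub, sub_eq_zero]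
      calc B z (u * v) = B (z * u) v := (hassoc z u v).symm
        _ = B (u * z) v := by rw [hzc u]
        _ = B u (z * v) := hassoc u z v
        _ = B (z * v) u := hsymm u _
        _ = B z (v * u) := hassoc z v u
    exact LinearMap.mem_ker.1 (hker hx0)
  exact ⟨c1, c2, c3, c4, c5, c6⟩
end

section
/- Let K be an algebraically closed field of characteristic 3 and Λ₂' the bound quiver algebra defined by the quiver with loop α at vertex 1, arrows β: 1 → 2, γ: 2 → 1 and relations α³ = γβ, βγ = 0, βα² = 0, α²γ = 0. Then the commutator subspace K(Λ₂') is spanned by {γ, β, αγ, βα, γβ, βαγ - αγβ}; in particular α³ = γβ ∈ K(Λ₂'). -/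
/-!
The commutator is bilinear and the eleven paths span `Λ₂'`, so `K(Λ₂')` is spanned by the
commutators of pairs of paths. Multiplying out with the relations, each of these is `0` or `±` one
of the six listed elements. Conversely each listed element is a single commutator:
`[e₁, γ] = γ`, `[e₂, β] = β`, `[α, γ] = αγ`, `[β, α] = βα`, `[γ, β] = γβ` and
`[β, αγ] = βαγ - αγβ`; in the first five the reversed product is 0.
-/

open Submodule

theorem span_commutators_le_of_span_eq_top {R A : Type*} [CommSemiring R] [Ring A] [Algebra R A]
    {s : Set A} (hs : span R s = ⊤) {M : Submodule R A}
    (h : ∀ x ∈ s, ∀ y ∈ s, x * y - y * x ∈ M) :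
    span R {z : A | ∃ u v : A, z = u * v - v * u} ≤ M := by
  let c : A →ₗ[R] A →ₗ[R] A := LinearMap.mul R A - (LinearMap.mul R A).flip
  have hc : map₂ c ⊤ ⊤ ≤ M := by
    rw [← hs, map₂_span_span, span_le]
    rintro _ ⟨x, hx, y, hy, rfl⟩
    exact h x hx y hy
  rw [span_le]
  rintro _ ⟨u, v, rfl⟩
  exact hc (apply_mem_map₂ c mem_top mem_top)

theorem mem_span_of_mem_or_neg_mem {R M : Type*} [Ring R] [AddCommGroup M] [Module R M]
    {s : Set M} {x : M} (h : x ∈ s ∨ -x ∈ s) : x ∈ span R s :=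
  h.elim (subset_span ·) fun hx => neg_neg x ▸ neg_mem (subset_span hx)

theorem mul_mul_of_mul_eq {M : Type*} [Semigroup M] {a b c : M} (h : a * b = c) (x : M) :
    a * (b * x) = c * x := by
  rw [← mul_assoc, h]

theorem mul_mul_mul_of_mul_mul_eq {M : Type*} [Semigroup M] {a b c d : M}
    (h : a * (b * c) = d) (x : M) : a * (b * (c * x)) = d * x := by
  rw [← mul_assoc b, ← mul_assoc, h]

/-- Paths compose like functions: the arrow `β : 1 → 2` satisfies `e₂ β = β = β e₁`. -/
structure Lambda2'Relations {Λ : Type*} [MonoidWithZero Λ] (e1 e2 α β γ : Λ) : Prop where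
  e1_mul_e2 : e1 * e2 = 0
  e2_mul_e1 : e2 * e1 = 0
  e1_mul_α : e1 * α = α
  α_mul_e1 : α * e1 = α
  e2_mul_β : e2 * β = β
  β_mul_e1 : β * e1 = β
  e1_mul_γ : e1 * γ = γ
  γ_mul_e2 : γ * e2 = γ
  α_pow_three : α ^ 3 = γ * β
  β_mul_γ : β * γ = 0
  β_mul_α_sq : β * α ^ 2 = 0
  α_sq_mul_γ : α ^ 2 * γ = 0

namespace Lambda2'Relations

variable {Λ : Type*} [MonoidWithZero Λ] {e1 e2 α β γ : Λ}

theorem e2_mul_α (h : Lambda2'Relations e1 e2 α β γ) : e2 * α = 0 := by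
  rw [← h.e1_mul_α, ← mul_assoc, h.e2_mul_e1, zero_mul]

theorem α_mul_e2 (h : Lambda2'Relations e1 e2 α β γ) : α * e2 = 0 := by
  rw [← h.α_mul_e1, mul_assoc, h.e1_mul_e2, mul_zero]

theorem e2_mul_γ (h : Lambda2'Relations e1 e2 α β γ) : e2 * γ = 0 := by
  rw [← h.e1_mul_γ, ← mul_assoc, h.e2_mul_e1, zero_mul]

theorem γ_mul_e1 (h : Lambda2'Relations e1 e2 α β γ) : γ * e1 = 0 := by
  rw [← h.γ_mul_e2, mul_assoc, h.e2_mul_e1, mul_zero]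

theorem e1_mul_β (h : Lambda2'Relations e1 e2 α β γ) : e1 * β = 0 := by
  rw [← h.e2_mul_β, ← mul_assoc, h.e1_mul_e2, zero_mul]

theorem β_mul_e2 (h : Lambda2'Relations e1 e2 α β γ) : β * e2 = 0 := by
  rw [← h.β_mul_e1, mul_assoc, h.e1_mul_e2, mul_zero]

theorem α_mul_β (h : Lambda2'Relations e1 e2 α β γ) : α * β = 0 := by
  rw [← h.e2_mul_β, ← mul_assoc, h.α_mul_e2, zero_mul]

theorem γ_mul_α (h : Lambda2'Relations e1 e2 α β γ) : γ * α = 0 := by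
  rw [← h.e1_mul_α, ← mul_assoc, h.γ_mul_e1, zero_mul]

theorem γ_mul_γ (h : Lambda2'Relations e1 e2 α β γ) : γ * γ = 0 := by
  nth_rw 2 [← h.e1_mul_γ]
  rw [← mul_assoc, h.γ_mul_e1, zero_mul]

theorem β_mul_β (h : Lambda2'Relations e1 e2 α β γ) : β * β = 0 := by
  nth_rw 2 [← h.e2_mul_β]
  rw [← mul_assoc, h.β_mul_e2, zero_mul]

theorem γ_mul_β (h : Lambda2'Relations e1 e2 α β γ) : γ * β = α * (α * α) := by
  rw [← h.α_pow_three, pow_succ', sq]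

theorem β_mul_α_mul_α (h : Lambda2'Relations e1 e2 α β γ) : β * (α * α) = 0 := by
  rw [← sq, h.β_mul_α_sq]

theorem α_mul_α_mul_γ (h : Lambda2'Relations e1 e2 α β γ) : α * (α * γ) = 0 := by
  rw [← mul_assoc, ← sq, h.α_sq_mul_γ]

theorem α_pow_five (h : Lambda2'Relations e1 e2 α β γ) : α * (α * (α * (α * α))) = 0 := by
  rw [← h.γ_mul_β, ← mul_assoc α γ β, ← mul_assoc α (α * γ) β, h.α_mul_α_mul_γ, zero_mul]

end Lambda2'Relations

def lambda2'Paths {Λ : Type*} [Monoid Λ] (e1 e2 α β γ : Λ) : Set Λ :=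
  {e1, α, α ^ 2, α ^ 3, α ^ 4, γ, α * γ, e2, β, β * α, β * α * γ}

theorem Lambda2'Relations.commutator_mem_span {K Λ : Type*} [Ring K] [Ring Λ] [Module K Λ]
    {e1 e2 α β γ : Λ} (h : Lambda2'Relations e1 e2 α β γ) :
    ∀ x ∈ lambda2'Paths e1 e2 α β γ, ∀ y ∈ lambda2'Paths e1 e2 α β γ,
      x * y - y * x ∈ span K {γ, β, α * γ, β * α, γ * β, β * α * γ - α * γ * β} := by
  simp only [lambda2'Paths, Set.mem_insert_iff, Set.mem_singleton_iff, forall_eq_or_imp,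
    forall_eq]
  refine ⟨?_, ?_, ?_, ?_, ?_, ?_, ?_, ?_, ?_, ?_, ?_⟩ <;>
  refine ⟨?_, ?_, ?_, ?_, ?_, ?_, ?_, ?_, ?_, ?_, ?_⟩ <;>
  -- products are normalised to right-associated words, so a rule `a * b = c` is also needed in
  -- the form `a * (b * x) = c * x`
  simp only [pow_succ, pow_zero, one_mul, mul_assoc, zero_mul, mul_zero, sub_zero, zero_sub,
    sub_self,
    h.e1_mul_e2, h.e2_mul_e1, h.e1_mul_α, h.α_mul_e1, h.e2_mul_β, h.β_mul_e1, h.e1_mul_γ,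
    h.γ_mul_e2, h.β_mul_γ, h.e2_mul_α, h.α_mul_e2, h.e2_mul_γ, h.γ_mul_e1, h.e1_mul_β,
    h.β_mul_e2, h.α_mul_β, h.γ_mul_α, h.γ_mul_γ, h.β_mul_β, h.γ_mul_β, h.β_mul_α_mul_α,
    h.α_mul_α_mul_γ, h.α_pow_five,
    mul_mul_of_mul_eq h.e1_mul_α, mul_mul_of_mul_eq h.e2_mul_β, mul_mul_of_mul_eq h.e2_mul_α,
    mul_mul_of_mul_eq h.e1_mul_β, mul_mul_of_mul_eq h.α_mul_β, mul_mul_of_mul_eq h.γ_mul_α,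
    mul_mul_of_mul_eq h.β_mul_β, mul_mul_of_mul_eq h.γ_mul_β,
    mul_mul_mul_of_mul_mul_eq h.β_mul_α_mul_α] <;>
  first
    | exact zero_mem _
    | exact mem_span_of_mem_or_neg_mem (by simp)

theorem Lambda2'Relations.subset_commutators {Λ : Type*} [Ring Λ] {e1 e2 α β γ : Λ}
    (h : Lambda2'Relations e1 e2 α β γ) :
    {γ, β, α * γ, β * α, γ * β, β * α * γ - α * γ * β} ⊆
      {x : Λ | ∃ u v : Λ, x = u * v - v * u} := by
  simp only [Set.insert_subset_iff, Set.singleton_subset_iff, Set.mem_ofPred_eq]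
  exact ⟨⟨e1, γ, by rw [h.e1_mul_γ, h.γ_mul_e1, sub_zero]⟩,
    ⟨e2, β, by rw [h.e2_mul_β, h.β_mul_e2, sub_zero]⟩,
    ⟨α, γ, by rw [h.γ_mul_α, sub_zero]⟩,
    ⟨β, α, by rw [h.α_mul_β, sub_zero]⟩,
    ⟨γ, β, by rw [h.β_mul_γ, sub_zero]⟩,
    ⟨β, α * γ, by rw [mul_assoc]⟩⟩

theorem commutator_space_of_Lambda2'_general
    (K : Type*) [Field K]
    (Λ : Type*) [Ring Λ] [Algebra K Λ]
    (e1 e2 α β γ : Λ)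
    (h12 : e1 * e2 = 0) (h21 : e2 * e1 = 0)
    (hα1 : e1 * α = α) (hα2 : α * e1 = α)
    (hβ1 : e2 * β = β) (hβ2 : β * e1 = β)
    (hγ1 : e1 * γ = γ) (hγ2 : γ * e2 = γ)
    (r1 : α ^ 3 = γ * β) (r2 : β * γ = 0) (r3 : β * α ^ 2 = 0) (r4 : α ^ 2 * γ = 0)
    (b : Module.Basis (Fin 11) K Λ)
    (hb0 : b 0 = e1) (hb1 : b 1 = α) (hb2 : b 2 = α ^ 2) (hb3 : b 3 = α ^ 3)
    (hb4 : b 4 = α ^ 4) (hb5 : b 5 = γ) (hb6 : b 6 = α * γ) (hb7 : b 7 = e2)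
    (hb8 : b 8 = β) (hb9 : b 9 = β * α) (hb10 : b 10 = β * α * γ) :
    Submodule.span K {x : Λ | ∃ u v : Λ, x = u * v - v * u} =
      Submodule.span K {γ, β, α * γ, β * α, γ * β, β * α * γ - α * γ * β} ∧
    α ^ 3 ∈ Submodule.span K {x : Λ | ∃ u v : Λ, x = u * v - v * u} := by
  have h : Lambda2'Relations e1 e2 α β γ :=
    ⟨h12, h21, hα1, hα2, hβ1, hβ2, hγ1, hγ2, r1, r2, r3, r4⟩
  have hpaths : span K (lambda2'Paths e1 e2 α β γ) = ⊤ := by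
    rw [eq_top_iff, ← b.span_eq, span_le]
    rintro _ ⟨i, rfl⟩
    refine subset_span ?_
    fin_cases i <;> simp [lambda2'Paths, hb0, hb1, hb2, hb3, hb4, hb5, hb6, hb7, hb8, hb9, hb10]
  refine ⟨le_antisymm (span_commutators_le_of_span_eq_top hpaths h.commutator_mem_span)
    (span_mono h.subset_commutators), subset_span ⟨γ, β, by rw [r2, sub_zero, r1]⟩⟩

/-- The commutator subspace of the standard algebra `Λ₂'` (char 3) is spanned by
`{γ, β, αγ, βα, γβ, βαγ - αγβ}`; in particular `α³ = γβ ∈ K(Λ₂')`. -/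
theorem commutator_space_of_Lambda2'
    (K : Type*) [Field K] [IsAlgClosed K] [CharP K 3]
    (Λ : Type*) [Ring Λ] [Algebra K Λ]
    (e1 e2 α β γ : Λ)
    (he1 : e1 * e1 = e1) (he2 : e2 * e2 = e2)
    (h12 : e1 * e2 = 0) (h21 : e2 * e1 = 0) (hsum : e1 + e2 = 1)
    (hα1 : e1 * α = α) (hα2 : α * e1 = α)
    (hβ1 : e2 * β = β) (hβ2 : β * e1 = β)
    (hγ1 : e1 * γ = γ) (hγ2 : γ * e2 = γ)
    (r1 : α ^ 3 = γ * β) (r2 : β * γ = 0) (r3 : β * α ^ 2 = 0) (r4 : α ^ 2 * γ = 0)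
    (b : Module.Basis (Fin 11) K Λ)
    (hb0 : b 0 = e1) (hb1 : b 1 = α) (hb2 : b 2 = α ^ 2) (hb3 : b 3 = α ^ 3)
    (hb4 : b 4 = α ^ 4) (hb5 : b 5 = γ) (hb6 : b 6 = α * γ) (hb7 : b 7 = e2)
    (hb8 : b 8 = β) (hb9 : b 9 = β * α) (hb10 : b 10 = β * α * γ) :
    Submodule.span K {x : Λ | ∃ u v : Λ, x = u * v - v * u} =
      Submodule.span K {γ, β, α * γ, β * α, γ * β, β * α * γ - α * γ * β} ∧
    α ^ 3 ∈ Submodule.span K {x : Λ | ∃ u v : Λ, x = u * v - v * u} :=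
  commutator_space_of_Lambda2'_general K Λ e1 e2 α β γ h12 h21 hα1 hα2 hβ1 hβ2 hγ1 hγ2 r1 r2 r3 r4 b
    hb0 hb1 hb2 hb3 hb4 hb5 hb6 hb7 hb8 hb9 hb10
end

section
/- Let K be an algebraically closed field of characteristic 2 and μ ∈ K \ {0,1}. In the algebra Λ₃'(μ) given by the quiver with loops α at vertex 1 and β at vertex 2, arrows σ: 2 → 1, γ: 1 → 2, and relations α² = σγ, μβ² = γσ, γα = βγ, σβ = ασ, one has α⁴ = 0, β⁴ = 0, γα² = 0, and α²σ = 0. -/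
/-- In the algebra `Λ₃'(μ)` over an algebraically closed field of characteristic 2,
with `μ ∉ {0,1}`, one has `α⁴ = 0`, `β⁴ = 0`, `γα² = 0` and `α²σ = 0`. -/
theorem vanishing_in_Lambda3'
    (K : Type*) [Field K] [IsAlgClosed K] [CharP K 2]
    (μ : K) (hμ0 : μ ≠ 0) (hμ1 : μ ≠ 1)
    (Λ : Type*) [Ring Λ] [Algebra K Λ]
    (e1 e2 α β σ γ : Λ)
    (he1 : e1 * e1 = e1) (he2 : e2 * e2 = e2)
    (h12 : e1 * e2 = 0) (h21 : e2 * e1 = 0) (hsum : e1 + e2 = 1)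
    -- α a loop at vertex 1, β a loop at vertex 2, σ : 2 → 1, γ : 1 → 2
    (hα1 : e1 * α = α) (hα2 : α * e1 = α)
    (hβ1 : e2 * β = β) (hβ2 : β * e2 = β)
    (hσ1 : e1 * σ = σ) (hσ2 : σ * e2 = σ)
    (hγ1 : e2 * γ = γ) (hγ2 : γ * e1 = γ)
    -- relations of Λ₃'(μ)
    (r1 : α ^ 2 = σ * γ) (r2 : μ • β ^ 2 = γ * σ)
    (r3 : γ * α = β * γ) (r4 : σ * β = α * σ) :
    α ^ 4 = 0 ∧ β ^ 4 = 0 ∧ γ * α ^ 2 = 0 ∧ α ^ 2 * σ = 0 := by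
  have hkill : ∀ x : Λ, x = μ • x → x = 0 := by
    intro x hx
    have h : (1 - μ) • x = 0 := by
      rw [sub_smul, one_smul, ← hx, sub_self]
    have hne : (1 - μ) ≠ 0 := sub_ne_zero.mpr (Ne.symm hμ1)
    have h2 := congrArg (fun y => (1 - μ)⁻¹ • y) h
    simp only [smul_smul, inv_mul_cancel₀ hne, one_smul, smul_zero] at h2
    exact h2
  -- β² γ = 0
  have hb2g : β ^ 2 * γ = 0 := by
    apply hkill
    have h1 : γ * α ^ 2 = β ^ 2 * γ := by
      rw [pow_two, ← mul_assoc, r3, mul_assoc, r3, ← mul_assoc, ← pow_two]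
    have h2 : γ * α ^ 2 = μ • (β ^ 2 * γ) := by
      rw [r1, ← mul_assoc, ← r2, smul_mul_assoc]
    exact h1.symm.trans h2
  have hga2 : γ * α ^ 2 = 0 := by
    rw [pow_two, ← mul_assoc, r3, mul_assoc, r3, ← mul_assoc, ← pow_two, hb2g]
  -- α² σ = 0
  have ha2s : α ^ 2 * σ = 0 := by
    apply hkill
    calc α ^ 2 * σ = σ * (γ * σ) := by rw [r1, mul_assoc]
    _ = σ * (μ • β ^ 2) := by rw [r2]
    _ = μ • (σ * β ^ 2) := (mul_smul_comm _ _ _)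
    _ = μ • (α ^ 2 * σ) := by
        congr 1
        rw [pow_two, pow_two, ← mul_assoc, r4, mul_assoc, r4, ← mul_assoc]
  have ha4 : α ^ 4 = 0 := by
    have h0 : α ^ 4 = α ^ 2 * α ^ 2 := by rw [← pow_add]
    rw [h0, r1, mul_assoc, ← mul_assoc γ, ← r2, smul_mul_assoc, mul_smul_comm,
      hb2g, mul_zero, smul_zero]
  have hb4 : β ^ 4 = 0 := by
    have key : (μ * μ) • β ^ 4 = 0 := by
      have : (μ • β ^ 2) * (μ • β ^ 2) = (μ * μ) • β ^ 4 := by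
        rw [smul_mul_assoc, mul_smul_comm, smul_smul, ← pow_add]
      rw [r2, mul_assoc, ← mul_assoc σ, ← r1, ← mul_assoc, hga2, zero_mul] at this
      exact this.symm
    have hne : μ * μ ≠ 0 := mul_ne_zero hμ0 hμ0
    have h2 := congrArg (fun y => (μ * μ)⁻¹ • y) key
    simp only [smul_smul, inv_mul_cancel₀ hne, one_smul, smul_zero] at h2
    exact h2
  exact ⟨ha4, hb4, hga2, ha2s⟩
end

section
/- Let K be an algebraically closed field of characteristic 2 and μ ∈ K∖{0,1}. For Λ₃'(μ) (relations α² = σγ, μβ² = γσ, γα = βγ, σβ = ασ), let √μ denote the square root of μ in K. Then the element α + √μ·β satisfies (α + √μ·β)² ∈ K(Λ₃'(μ)), i.e. α + √μ·β ∈ T₁(Λ₃'(μ)), where K(Λ₃'(μ)) = span{σ, γ, ασ, γα, γσ − σγ, γσβ − σβγ}. -/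
/-!
Use the Peirce decomposition for `e₁, e₂`. Modulo the off-diagonal components `eᵢ Λ eⱼ`
(`i ≠ j`), each of which consists of commutators since `x = eᵢ x - x eᵢ` there, a commutator
`[u, v]` is the sum of the `[eᵢ u eⱼ, eⱼ v eᵢ]`. The diagonal corners are spanned by powers of
`α` and of `β`, hence commutative, while `e₁ Λ e₂ = span {σ, ασ}` and `e₂ Λ e₁ = span {γ, γα}`.
So `K(Λ)` is spanned by `σ, γ, ασ, γα` and the four commutators `[σ, γ]`, `[σ, γα]`, `[ασ, γ]`,
`[ασ, γα]`, which the relations turn into `γσ - σγ`, `±(γσβ - σβγ)` and `0`.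
Finally `αβ = βα = 0`, so in characteristic `2` we get `(α + √μ β)² = σγ + γσ = [γ, σ]`.
-/

open Submodule

section PeirceCorner

variable (R : Type*) {A : Type*} [CommRing R] [Ring A] [Algebra R A]

/-- For idempotents `e` and `f` this is the Peirce component `e A f`. -/
def peirceCorner (e f : A) : Submodule R A where
  carrier := {x | e * x = x ∧ x * f = x}
  add_mem' := by
    rintro x y ⟨hx₁, hx₂⟩ ⟨hy₁, hy₂⟩
    exact ⟨by rw [mul_add, hx₁, hy₁], by rw [add_mul, hx₂, hy₂]⟩
  zero_mem' := ⟨mul_zero e, zero_mul f⟩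
  smul_mem' := by
    rintro c x ⟨hx₁, hx₂⟩
    exact ⟨by rw [mul_smul_comm, hx₁], by rw [smul_mul_assoc, hx₂]⟩

variable {R} {e f f' g x y : A}

theorem mem_peirceCorner : x ∈ peirceCorner R e f ↔ e * x = x ∧ x * f = x := Iff.rfl

theorem IsIdempotentElem.mem_peirceCorner (he : IsIdempotentElem e) : e ∈ peirceCorner R e e :=
  ⟨he, he⟩

theorem mul_mem_peirceCorner (hx : x ∈ peirceCorner R e f) (hy : y ∈ peirceCorner R f g) :
    x * y ∈ peirceCorner R e g :=
  ⟨by rw [← mul_assoc, hx.1], by rw [mul_assoc, hy.2]⟩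

theorem pow_succ_mem_peirceCorner (hx : x ∈ peirceCorner R e e) (n : ℕ) :
    x ^ (n + 1) ∈ peirceCorner R e e := by
  induction n with
  | zero => rwa [pow_one]
  | succ n ih => rw [pow_succ]; exact mul_mem_peirceCorner ih hx

theorem mul_eq_zero_of_mem_peirceCorner (hx : x ∈ peirceCorner R e f)
    (hy : y ∈ peirceCorner R f' g) (h : f * f' = 0) : x * y = 0 := by
  rw [← hx.2, ← hy.1, mul_assoc, ← mul_assoc f, h, zero_mul, mul_zero]

theorem eq_commutator_of_mem_peirceCorner (hx : x ∈ peirceCorner R e f) (h : f * e = 0) :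
    x = e * x - x * e := by
  have hxe : x * e = 0 := by rw [← hx.2, mul_assoc, h, mul_zero]
  rw [hx.1, hxe, sub_zero]

end PeirceCorner

section Commutator

/-- The subspace `K(A)` spanned by the commutators. -/
def commutatorSpan (R A : Type*) [CommRing R] [Ring A] [Algebra R A] : Submodule R A :=
  span R {x | ∃ u v : A, x = u * v - v * u}

variable {R A : Type*} [CommRing R] [Ring A] [Algebra R A] {x y : A}

theorem commutator_mem_commutatorSpan (u v : A) : u * v - v * u ∈ commutatorSpan R A :=
  subset_span ⟨u, v, rfl⟩

theorem commutatorSpan_le {S : Submodule R A} (h : ∀ u v : A, u * v - v * u ∈ S) :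
    commutatorSpan R A ≤ S :=
  span_le.2 fun _ ⟨u, v, hx⟩ => hx ▸ h u v

theorem mem_commutatorSpan_of_mem_peirceCorner {e f : A} (hx : x ∈ peirceCorner R e f)
    (h : f * e = 0) : x ∈ commutatorSpan R A :=
  eq_commutator_of_mem_peirceCorner hx h ▸ commutator_mem_commutatorSpan e x

theorem commutator_mem_of_mem_span {S : Submodule R A} {s t : Set A}
    (h : ∀ x ∈ s, ∀ y ∈ t, x * y - y * x ∈ S) (hx : x ∈ span R s) (hy : y ∈ span R t) :
    x * y - y * x ∈ S := by
  have : map₂ (LinearMap.mul R A - (LinearMap.mul R A).flip) (span R s) (span R t) ≤ S := by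
    rw [map₂_span_span, span_le]
    rintro _ ⟨x, hx, y, hy, rfl⟩
    exact h x hx y hy
  exact map₂_le.1 this x hx y hy

theorem commute_of_mem_adjoin_pair {a b : A} (h : Commute a b)
    (hx : x ∈ Algebra.adjoin R {a, b}) (hy : y ∈ Algebra.adjoin R {a, b}) : Commute x y := by
  have hgen : ∀ c ∈ ({a, b} : Set A), ∀ d ∈ ({a, b} : Set A), Commute c d := by
    rintro c (rfl | rfl) d (rfl | rfl)
    exacts [Commute.refl _, h, h.symm, Commute.refl _]
  refine Algebra.commute_of_mem_adjoin_of_forall_mem_commute hy fun d hd => ?_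
  exact (Algebra.commute_of_mem_adjoin_of_forall_mem_commute hx (hgen d hd)).symm

end Commutator

namespace CompleteOrthogonalIdempotents

section Ring

variable {A I : Type*} [Ring A] [Fintype I] {e : I → A} (he : CompleteOrthogonalIdempotents e)
include he

theorem sum_mul_mul_eq (x : A) : ∑ p : I × I, e p.1 * x * e p.2 = x := by
  simp_rw [Fintype.sum_prod_type, ← Finset.mul_sum, ← Finset.sum_mul, he.complete, one_mul,
    mul_one]

theorem mul_mul_mul_mem {S : AddSubgroup A} (hoff : ∀ i j, i ≠ j → ∀ x, e i * x * e j ∈ S)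
    {i j k l : I} (h : i ≠ l ∨ j ≠ k) (x y : A) : e i * x * e j * (e k * y * e l) ∈ S := by
  by_cases hil : i = l
  · have hjk : e j * e k = 0 := he.ortho (h.resolve_left (not_not.2 hil))
    have hprod : e i * x * e j * (e k * y * e l) = e i * x * (e j * e k) * y * e l := by
      simp only [mul_assoc]
    rw [hprod, hjk, mul_zero, zero_mul, zero_mul]
    exact S.zero_mem
  · simpa only [mul_assoc] using hoff i l hil (x * e j * e k * y)

/-- Modulo the off-diagonal Peirce components, a commutator `[u, v]` is the sum of the
commutators `[e i * u * e j, e j * v * e i]`. -/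
theorem commutator_mem {S : AddSubgroup A} (hoff : ∀ i j, i ≠ j → ∀ x, e i * x * e j ∈ S)
    (hdiag : ∀ i j x y,
      e i * x * e j * (e j * y * e i) - e j * y * e i * (e i * x * e j) ∈ S)
    (u v : A) : u * v - v * u ∈ S := by
  rw [← he.sum_mul_mul_eq u, ← he.sum_mul_mul_eq v, Finset.sum_mul_sum, Finset.sum_mul_sum]
  nth_rewrite 2 [Finset.sum_comm]
  rw [← Finset.sum_sub_distrib]
  refine S.sum_mem ?_
  rintro ⟨i, j⟩ -
  rw [← Finset.sum_sub_distrib]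
  refine S.sum_mem ?_
  rintro ⟨k, l⟩ -
  by_cases h : k = j ∧ l = i
  · obtain ⟨rfl, rfl⟩ := h
    exact hdiag _ _ u v
  · exact S.sub_mem (he.mul_mul_mul_mem hoff (by tauto) u v)
      (he.mul_mul_mul_mem hoff (by tauto) v u)

end Ring

section Algebra

variable {R A I : Type*} [CommRing R] [Ring A] [Algebra R A] [Fintype I] {e : I → A}
  (he : CompleteOrthogonalIdempotents e)
include he

theorem mul_mul_mem_span {T : I → I → Set A} (hT : span R (⋃ i, ⋃ j, T i j) = ⊤)
    (hTe : ∀ i j, T i j ⊆ peirceCorner R (e i) (e j)) (x : A) (i j : I) :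
    e i * x * e j ∈ span R (T i j) := by
  suffices span R (⋃ i, ⋃ j, T i j) ≤
      (span R (T i j)).comap (LinearMap.mulLeftRight R (e i, e j)) from this (hT ▸ mem_top)
  simp only [span_le, Set.iUnion_subset_iff]
  intro s t y hy
  obtain ⟨hy₁, hy₂⟩ := hTe s t hy
  simp only [SetLike.mem_coe, mem_comap, LinearMap.mulLeftRight_apply]
  by_cases hs : i = s
  · by_cases ht : j = t
    · subst hs ht
      rw [hy₁, hy₂]
      exact subset_span hy
    · rw [← hy₂]
      simp only [mul_assoc, he.ortho (Ne.symm ht), mul_zero, zero_mem]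
  · rw [← hy₁]
    simp only [← mul_assoc, he.ortho hs, zero_mul, zero_mem]

theorem commutator_mem_of_span_eq_top {S : Submodule R A} {T : I → I → Set A}
    (hT : span R (⋃ i, ⋃ j, T i j) = ⊤) (hTe : ∀ i j, T i j ⊆ peirceCorner R (e i) (e j))
    (hoff : ∀ i j, i ≠ j → T i j ⊆ S)
    (hdiag : ∀ i j, ∀ x ∈ T i j, ∀ y ∈ T j i, x * y - y * x ∈ S) (u v : A) :
    u * v - v * u ∈ S :=
  he.commutator_mem (S := S.toAddSubgroup)
    (fun i j hij x => span_le.2 (hoff i j hij) (he.mul_mul_mem_span hT hTe x i j))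
    (fun i j x y => commutator_mem_of_mem_span (hdiag i j)
      (he.mul_mul_mem_span hT hTe x i j) (he.mul_mul_mem_span hT hTe y j i)) u v

end Algebra

end CompleteOrthogonalIdempotents

theorem add_smul_sq_of_mul_eq_zero {R A : Type*} [CommSemiring R] [Semiring A] [Algebra R A]
    {a b : A} (hab : a * b = 0) (hba : b * a = 0) (m : R) :
    (a + m • b) ^ 2 = a ^ 2 + m ^ 2 • b ^ 2 := by
  simp only [sq, add_mul, mul_add, mul_smul_comm, smul_mul_assoc, smul_smul, hab, hba,
    smul_zero, add_zero, zero_add]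

theorem sub_eq_add_of_charTwo (R : Type*) {M : Type*} [Ring R] [CharP R 2] [AddCommGroup M]
    [Module R M] (x y : M) : x - y = x + y := by
  rw [sub_eq_add_neg, ← neg_one_smul R y, CharTwo.neg_eq, one_smul]

namespace Lambda3'

variable {K Λ : Type*} [Field K] [Ring Λ] [Algebra K Λ] {μ : K} {e₁ e₂ α β σ γ : Λ}

/-- The basis elements of `Λ₃'(μ)`, sorted by their Peirce component with respect to `e₁, e₂`. -/
def peirceBasis (e₁ e₂ α β σ γ : Λ) : Fin 2 → Fin 2 → Set Λ :=
  ![![{e₁, α, α ^ 2, α ^ 3}, {σ, α * σ}], ![{γ, γ * α}, {e₂, β, β ^ 2, β ^ 3}]]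

theorem peirceBasis_subset_peirceCorner (he₁ : IsIdempotentElem e₁)
    (he₂ : IsIdempotentElem e₂) (hα : α ∈ peirceCorner K e₁ e₁) (hβ : β ∈ peirceCorner K e₂ e₂)
    (hσ : σ ∈ peirceCorner K e₁ e₂) (hγ : γ ∈ peirceCorner K e₂ e₁) (i j : Fin 2) :
    peirceBasis e₁ e₂ α β σ γ i j ⊆ peirceCorner K (![e₁, e₂] i) (![e₁, e₂] j) := by
  fin_cases i <;> fin_cases j <;>
    simp only [peirceBasis, Set.insert_subset_iff, Set.singleton_subset_iff, SetLike.mem_coe,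
      Fin.zero_eta, Fin.mk_one, Matrix.cons_val_zero, Matrix.cons_val_one]
  · exact ⟨he₁.mem_peirceCorner, hα, pow_succ_mem_peirceCorner hα 1,
      pow_succ_mem_peirceCorner hα 2⟩
  · exact ⟨hσ, mul_mem_peirceCorner hα hσ⟩
  · exact ⟨hγ, mul_mem_peirceCorner hγ hα⟩
  · exact ⟨he₂.mem_peirceCorner, hβ, pow_succ_mem_peirceCorner hβ 1,
      pow_succ_mem_peirceCorner hβ 2⟩

/-- `α²σ = σγσ = μσβ² = μα²σ`, and `μ ≠ 1`. -/
theorem sq_mul_eq_zero (hμ1 : μ ≠ 1) (r1 : α ^ 2 = σ * γ) (r2 : μ • β ^ 2 = γ * σ)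
    (r4 : σ * β = α * σ) : α ^ 2 * σ = 0 := by
  have hσβ : σ * β ^ 2 = α ^ 2 * σ := by
    rw [sq, sq, ← mul_assoc, r4, mul_assoc, r4, ← mul_assoc]
  have h : α ^ 2 * σ = μ • (α ^ 2 * σ) := by
    rw [← hσβ, ← mul_smul_comm, r2, ← mul_assoc, ← r1, hσβ]
  have h' : (1 - μ) • (α ^ 2 * σ) = 0 := by rw [sub_smul, one_smul, ← h, sub_self]
  exact (smul_eq_zero.1 h').resolve_left (sub_ne_zero.2 hμ1.symm)

theorem commutator_mem_span_of_mem_offDiag (hμ1 : μ ≠ 1) (r1 : α ^ 2 = σ * γ)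
    (r2 : μ • β ^ 2 = γ * σ) (r4 : σ * β = α * σ) :
    ∀ x ∈ ({σ, α * σ} : Set Λ), ∀ y ∈ ({γ, γ * α} : Set Λ), x * y - y * x ∈
      span K {σ, γ, α * σ, γ * α, γ * σ - σ * γ, γ * σ * β - σ * β * γ} := by
  have hα2σ := sq_mul_eq_zero hμ1 r1 r2 r4
  have hσγ : σ * γ - γ * σ = -(γ * σ - σ * γ) := (neg_sub _ _).symm
  have hσγα : σ * (γ * α) - γ * α * σ = -(γ * σ * β - σ * β * γ) := calc
    _ = α ^ 2 * α - γ * (σ * β) := by rw [← mul_assoc, ← r1, mul_assoc, ← r4]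
    _ = α * α ^ 2 - γ * σ * β := by rw [← pow_succ, pow_succ', mul_assoc]
    _ = _ := by rw [neg_sub, r4, mul_assoc α σ γ, ← r1]
  have hασγ : α * σ * γ - γ * (α * σ) = -(γ * σ * β - σ * β * γ) := by
    rw [neg_sub, r4, mul_assoc γ σ β, r4]
  have hασγα : α * σ * (γ * α) - γ * α * (α * σ) = 0 := by
    have h₁ : α * σ * (γ * α) = 0 := calc
      _ = α * α ^ 2 * α := by rw [r1]; noncomm_ring
      _ = α ^ 2 * σ * γ := by rw [mul_assoc _ σ γ, ← r1]; noncomm_ring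
      _ = 0 := by rw [hα2σ, zero_mul]
    have h₂ : γ * α * (α * σ) = 0 := by rw [mul_assoc, ← mul_assoc α α σ, ← sq, hα2σ, mul_zero]
    rw [h₁, h₂, sub_zero]
  rintro x (rfl | rfl) y (rfl | rfl)
  · rw [hσγ]; exact neg_mem (subset_span (by simp))
  · rw [hσγα]; exact neg_mem (subset_span (by simp))
  · rw [hασγ]; exact neg_mem (subset_span (by simp))
  · rw [hασγα]; exact zero_mem _

theorem commutator_mem_of_mem_peirceBasis (he₁α : Commute e₁ α) (he₂β : Commute e₂ β)
    (hμ1 : μ ≠ 1) (r1 : α ^ 2 = σ * γ) (r2 : μ • β ^ 2 = γ * σ) (r4 : σ * β = α * σ)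
    (i j : Fin 2) :
    ∀ x ∈ peirceBasis e₁ e₂ α β σ γ i j, ∀ y ∈ peirceBasis e₁ e₂ α β σ γ j i,
      x * y - y * x ∈ span K {σ, γ, α * σ, γ * α, γ * σ - σ * γ, γ * σ * β - σ * β * γ} := by
  have hdiag : ∀ {e a : Λ}, Commute e a → ∀ x ∈ ({e, a, a ^ 2, a ^ 3} : Set Λ),
      ∀ y ∈ ({e, a, a ^ 2, a ^ 3} : Set Λ), x * y - y * x ∈
        span K {σ, γ, α * σ, γ * α, γ * σ - σ * γ, γ * σ * β - σ * β * γ} := by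
    intro e a h x hx y hy
    have hsub : ({e, a, a ^ 2, a ^ 3} : Set Λ) ⊆ Algebra.adjoin K {e, a} := by
      have ha : a ∈ Algebra.adjoin K {e, a} := Algebra.subset_adjoin (by simp)
      simp only [Set.insert_subset_iff, Set.singleton_subset_iff, SetLike.mem_coe]
      exact ⟨Algebra.subset_adjoin (by simp), ha, pow_mem ha 2, pow_mem ha 3⟩
    rw [(commute_of_mem_adjoin_pair h (hsub hx) (hsub hy)).eq, sub_self]
    exact zero_mem _
  have hoff := commutator_mem_span_of_mem_offDiag hμ1 r1 r2 r4
  fin_cases i <;> fin_cases j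
  · exact hdiag he₁α
  · exact hoff
  · intro x hx y hy
    simpa only [neg_sub] using neg_mem (hoff y hy x hx)
  · exact hdiag he₂β

theorem span_le_commutatorSpan (h₁₂ : e₁ * e₂ = 0) (h₂₁ : e₂ * e₁ = 0)
    (hα : α ∈ peirceCorner K e₁ e₁) (hσ : σ ∈ peirceCorner K e₁ e₂)
    (hγ : γ ∈ peirceCorner K e₂ e₁) :
    span K {σ, γ, α * σ, γ * α, γ * σ - σ * γ, γ * σ * β - σ * β * γ} ≤ commutatorSpan K Λ := by
  simp only [span_le, Set.insert_subset_iff, Set.singleton_subset_iff, SetLike.mem_coe]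
  exact ⟨mem_commutatorSpan_of_mem_peirceCorner hσ h₂₁,
    mem_commutatorSpan_of_mem_peirceCorner hγ h₁₂,
    mem_commutatorSpan_of_mem_peirceCorner (mul_mem_peirceCorner hα hσ) h₂₁,
    mem_commutatorSpan_of_mem_peirceCorner (mul_mem_peirceCorner hγ hα) h₁₂,
    commutator_mem_commutatorSpan γ σ,
    by simpa only [mul_assoc] using commutator_mem_commutatorSpan γ (σ * β)⟩

end Lambda3'

theorem sqrt_element_in_T1_of_Lambda3'_general
    (K : Type*) [Field K] [CharP K 2]
    (μ : K) (hμ1 : μ ≠ 1)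
    (Λ : Type*) [Ring Λ] [Algebra K Λ]
    (e1 e2 α β σ γ : Λ)
    (he1 : e1 * e1 = e1) (he2 : e2 * e2 = e2)
    (h12 : e1 * e2 = 0) (h21 : e2 * e1 = 0) (hsum : e1 + e2 = 1)
    (hα1 : e1 * α = α) (hα2 : α * e1 = α)
    (hβ1 : e2 * β = β) (hβ2 : β * e2 = β)
    (hσ1 : e1 * σ = σ) (hσ2 : σ * e2 = σ)
    (hγ1 : e2 * γ = γ) (hγ2 : γ * e1 = γ)
    (r1 : α ^ 2 = σ * γ) (r2 : μ • β ^ 2 = γ * σ)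
    (r4 : σ * β = α * σ)
    -- the twelve basis elements
    (b : Module.Basis (Fin 12) K Λ)
    (hb0 : b 0 = e1) (hb1 : b 1 = e2) (hb2 : b 2 = α) (hb3 : b 3 = β)
    (hb4 : b 4 = σ) (hb5 : b 5 = γ) (hb6 : b 6 = α ^ 2) (hb7 : b 7 = α * σ)
    (hb8 : b 8 = β ^ 2) (hb9 : b 9 = γ * α) (hb10 : b 10 = α ^ 3) (hb11 : b 11 = β ^ 3)
    -- the square root of μ
    (m : K) (hm : m ^ 2 = μ) :
    let KA : Submodule K Λ := Submodule.span K {x : Λ | ∃ u v : Λ, x = u * v - v * u}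
    KA = Submodule.span K
      {σ, γ, α * σ, γ * α, γ * σ - σ * γ, γ * σ * β - σ * β * γ} ∧
    (α + m • β) ^ 2 ∈ KA := by
  show commutatorSpan K Λ = _ ∧ _ ∈ commutatorSpan K Λ
  have hα : α ∈ peirceCorner K e1 e1 := mem_peirceCorner.2 ⟨hα1, hα2⟩
  have hβ : β ∈ peirceCorner K e2 e2 := mem_peirceCorner.2 ⟨hβ1, hβ2⟩
  have hσ : σ ∈ peirceCorner K e1 e2 := mem_peirceCorner.2 ⟨hσ1, hσ2⟩
  have hγ : γ ∈ peirceCorner K e2 e1 := mem_peirceCorner.2 ⟨hγ1, hγ2⟩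
  have hspan : span K (⋃ i, ⋃ j, Lambda3'.peirceBasis e1 e2 α β σ γ i j) = ⊤ := by
    refine eq_top_iff.2 (b.span_eq.ge.trans (span_mono ?_))
    rintro _ ⟨k, rfl⟩
    fin_cases k <;> simp [hb0, hb1, hb2, hb3, hb4, hb5, hb6, hb7, hb8, hb9, hb10, hb11,
      Lambda3'.peirceBasis, Fin.exists_fin_two]
  have hK : commutatorSpan K Λ ≤ _ := commutatorSpan_le
    ((CompleteOrthogonalIdempotents.pair_iff'ₛ.2 ⟨h12, h21, hsum⟩).commutator_mem_of_span_eq_top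
      hspan (Lambda3'.peirceBasis_subset_peirceCorner he1 he2 hα hβ hσ hγ)
      (by simp [Fin.forall_fin_two, Lambda3'.peirceBasis, Set.insert_subset_iff, mem_span_of_mem])
      (Lambda3'.commutator_mem_of_mem_peirceBasis (hα1.trans hα2.symm) (hβ1.trans hβ2.symm)
        hμ1 r1 r2 r4))
  have hsq : (α + m • β) ^ 2 = γ * σ - σ * γ := by
    rw [add_smul_sq_of_mul_eq_zero (mul_eq_zero_of_mem_peirceCorner hα hβ h12)
      (mul_eq_zero_of_mem_peirceCorner hβ hα h21), hm, r1, r2, sub_eq_add_of_charTwo K, add_comm]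
  exact ⟨hK.antisymm (Lambda3'.span_le_commutatorSpan h12 h21 hα hσ hγ),
    hsq ▸ commutator_mem_commutatorSpan γ σ⟩

/-- In `Λ₃'(μ)` (char 2, `μ ∉ {0,1}`), the element `α + √μ·β` squares into the
commutator subspace `K(Λ₃'(μ)) = span{σ, γ, ασ, γα, γσ − σγ, γσβ − σβγ}`,
i.e. `α + √μ·β ∈ T₁(Λ₃'(μ))`. -/
theorem sqrt_element_in_T1_of_Lambda3'
    (K : Type*) [Field K] [IsAlgClosed K] [CharP K 2]
    (μ : K) (hμ0 : μ ≠ 0) (hμ1 : μ ≠ 1)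
    (Λ : Type*) [Ring Λ] [Algebra K Λ]
    (e1 e2 α β σ γ : Λ)
    (he1 : e1 * e1 = e1) (he2 : e2 * e2 = e2)
    (h12 : e1 * e2 = 0) (h21 : e2 * e1 = 0) (hsum : e1 + e2 = 1)
    (hα1 : e1 * α = α) (hα2 : α * e1 = α)
    (hβ1 : e2 * β = β) (hβ2 : β * e2 = β)
    (hσ1 : e1 * σ = σ) (hσ2 : σ * e2 = σ)
    (hγ1 : e2 * γ = γ) (hγ2 : γ * e1 = γ)
    (r1 : α ^ 2 = σ * γ) (r2 : μ • β ^ 2 = γ * σ)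
    (r3 : γ * α = β * γ) (r4 : σ * β = α * σ)
    -- the twelve basis elements
    (b : Module.Basis (Fin 12) K Λ)
    (hb0 : b 0 = e1) (hb1 : b 1 = e2) (hb2 : b 2 = α) (hb3 : b 3 = β)
    (hb4 : b 4 = σ) (hb5 : b 5 = γ) (hb6 : b 6 = α ^ 2) (hb7 : b 7 = α * σ)
    (hb8 : b 8 = β ^ 2) (hb9 : b 9 = γ * α) (hb10 : b 10 = α ^ 3) (hb11 : b 11 = β ^ 3)
    -- the square root of μ
    (m : K) (hm : m ^ 2 = μ) :
    let KA : Submodule K Λ := Submodule.span K {x : Λ | ∃ u v : Λ, x = u * v - v * u}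
    KA = Submodule.span K
      {σ, γ, α * σ, γ * α, γ * σ - σ * γ, γ * σ * β - σ * β * γ} ∧
    (α + m • β) ^ 2 ∈ KA :=
  sqrt_element_in_T1_of_Lambda3'_general K μ hμ1 Λ e1 e2 α β σ γ he1 he2 h12 h21 hsum hα1 hα2 hβ1
    hβ2 hσ1 hσ2 hγ1 hγ2 r1 r2 r4 b hb0 hb1 hb2 hb3 hb4 hb5 hb6 hb7 hb8 hb9 hb10 hb11 m hm
end
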